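/- arXiv:2205.15808 — 5 statements merged into one kernel-verified Lean document; each statement's English description precedes it below -/
import Mathlib

section
/- Let (Ω, F, P) be a probability space, 𝒢 ⊆ F a sub-σ-algebra, b ∈ (1, 2], τ > 0, C ≥ 0, and let X : Ω → ℝ be a random variable with E[|X|^b] < ∞, E[X | 𝒢] = 0 almost surely, and E[|X|^b | 𝒢] ≤ C almost surely. Then, P-almost surely, |E[ψ_τ(X) | 𝒢]| ≤ C τ^{1−b}. -/
open MeasureTheory Real

/-- The truncation function `ψ_τ(x) = max(−τ, min(x, τ))`. -/
noncomputable def truncFun (τ : ℝ) (x : ℝ) : ℝ := max (-τ) (min x τ)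

lemma truncFun_abs_le {τ : ℝ} (hτ : 0 < τ) (x : ℝ) : |truncFun τ x| ≤ τ := by
  rw [abs_le]
  constructor
  · exact le_max_left _ _
  · exact max_le (by linarith) (min_le_right _ _)

lemma truncFun_sub_abs_le {b τ : ℝ} (hb1 : 1 < b) (hτ : 0 < τ) (x : ℝ) :
    |truncFun τ x - x| ≤ τ ^ (1 - b) * |x| ^ b := by
  have hpos : (0:ℝ) ≤ τ ^ (1 - b) * |x| ^ b :=
    mul_nonneg (rpow_nonneg hτ.le _) (rpow_nonneg (abs_nonneg x) _)
  rcases le_or_gt (|x|) τ with h | h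
  · have hx : truncFun τ x = x := by
      rw [abs_le] at h
      unfold truncFun
      rw [min_eq_left h.2, max_eq_right h.1]
    rw [hx, sub_self, abs_zero]; exact hpos
  · -- |x| > τ : key inequality |x| ≤ τ^(1-b) * |x|^b
    have hxpos : (0:ℝ) < |x| := lt_trans hτ h
    have key : |x| ≤ τ ^ (1 - b) * |x| ^ b := by
      have h1 : τ ^ (b - 1) ≤ |x| ^ (b - 1) :=
        rpow_le_rpow hτ.le h.le (by linarith)
      have h2 : |x| ^ b = |x| * |x| ^ (b - 1) := by
        rw [← rpow_one_add' (by positivity) (by intro hh; nlinarith)]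
        ring_nf
      rw [h2, ← mul_assoc]
      calc |x| = (τ ^ (1 - b) * τ ^ (b - 1)) * |x| := by
              rw [← rpow_add hτ]; simp
        _ ≤ (τ ^ (1 - b) * |x| ^ (b - 1)) * |x| := by
              gcongr
        _ = τ ^ (1 - b) * |x| * |x| ^ (b - 1) := by ring
    have habs : |truncFun τ x - x| ≤ |x| := by
      rcases lt_or_ge x 0 with hx0 | hx0
      · have hxτ : x < -τ := by
          rcases abs_cases x with ⟨h1, _⟩ | ⟨h1, _⟩ <;> [linarith; linarith]
        have : truncFun τ x = -τ := by
          unfold truncFun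
          rw [max_eq_left]
          exact le_trans (min_le_left _ _) (by linarith)
        rw [this, abs_of_nonneg (by linarith), abs_of_neg hx0]; linarith
      · have hxτ : τ < x := by
          rcases abs_cases x with ⟨h1, _⟩ | ⟨h1, _⟩ <;> [linarith; linarith]
        have : truncFun τ x = τ := by
          unfold truncFun
          rw [min_eq_right hxτ.le, max_eq_right (by linarith)]
        rw [this, abs_of_nonpos (by linarith), abs_of_pos (by linarith)]; linarith
    exact habs.trans key

theorem trunc_conditional_bias_bound
    {Ω : Type*} {m : MeasurableSpace Ω} {mΩ : MeasurableSpace Ω} (μ : Measure Ω) [IsProbabilityMeasure μ]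
    (hm : m ≤ mΩ)
    (b τ C : ℝ) (hb : b ∈ Set.Ioc (1 : ℝ) 2) (hτ : 0 < τ) (hC : 0 ≤ C)
    (X : Ω → ℝ) (hX : Measurable X) (hXint : Integrable X μ)
    (hXb : Integrable (fun ω => |X ω| ^ b) μ)
    (hzero : μ[X | m] =ᵐ[μ] 0)
    (hcond : ∀ᵐ ω ∂μ, (μ[fun ω' => |X ω'| ^ b | m]) ω ≤ C) :
    ∀ᵐ ω ∂μ, |(μ[fun ω' => truncFun τ (X ω') | m]) ω| ≤ C * τ ^ (1 - b) := by
  obtain ⟨hb1, hb2⟩ := hb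
  set T : Ω → ℝ := fun ω => truncFun τ (X ω) with hT
  have hTmeas : Measurable[mΩ] T :=
    ((measurable_const.max (hX.min measurable_const)))
  have hTint : Integrable T μ :=
    (integrable_const τ).mono' hTmeas.aestronglyMeasurable
      (Filter.Eventually.of_forall fun ω => by
        rw [Real.norm_eq_abs]; exact truncFun_abs_le hτ _)
  set Y : Ω → ℝ := fun ω => T ω - X ω with hY
  have hYint : Integrable Y μ := (hTint.sub) hXint
  have hYbd : ∀ ω, |Y ω| ≤ τ ^ (1 - b) * |X ω| ^ b := fun ω =>
    truncFun_sub_abs_le hb1 hτ (X ω)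
  -- condexp of T equals condexp of Y a.e.
  have h1 : μ[T | m] =ᵐ[μ] μ[Y | m] + μ[X | m] := by
    have : μ[Y | m] =ᵐ[μ] μ[T | m] - μ[X | m] := condExp_sub hTint hXint m
    filter_upwards [this] with ω hω
    simp only [Pi.add_apply, Pi.sub_apply] at *
    linarith
  have h2 : μ[T | m] =ᵐ[μ] μ[Y | m] := by
    filter_upwards [h1, hzero] with ω hω hz
    simp only [Pi.add_apply, Pi.zero_apply] at *
    rw [hω, hz, add_zero]
  -- |μ[Y|m]| ≤ μ[|Y||m] a.e.
  have hYabs_int : Integrable (fun ω => |Y ω|) μ := hYint.abs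
  have hge : μ[Y | m] ≤ᵐ[μ] μ[fun ω => |Y ω| | m] :=
    condExp_mono hYint hYabs_int (Filter.Eventually.of_forall fun ω => le_abs_self _)
  have hle : μ[fun ω => -Y ω | m] ≤ᵐ[μ] μ[fun ω => |Y ω| | m] :=
    condExp_mono hYint.neg hYabs_int (Filter.Eventually.of_forall fun ω => neg_le_abs _)
  have hneg : μ[fun ω => -Y ω | m] =ᵐ[μ] -μ[Y | m] := condExp_neg Y m
  -- μ[|Y||m] ≤ τ^(1-b) * μ[|X|^b|m] a.e.
  have hZint : Integrable (fun ω => τ ^ (1 - b) * |X ω| ^ b) μ := hXb.const_mul _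
  have hmono : μ[fun ω => |Y ω| | m] ≤ᵐ[μ] μ[fun ω => τ ^ (1 - b) * |X ω| ^ b | m] :=
    condExp_mono hYabs_int hZint (Filter.Eventually.of_forall hYbd)
  have hsmul : μ[fun ω => τ ^ (1 - b) * |X ω| ^ b | m]
      =ᵐ[μ] fun ω => τ ^ (1 - b) * (μ[fun ω' => |X ω'| ^ b | m]) ω := by
    have := condExp_smul (μ := μ) (m := m) (τ ^ (1 - b)) (fun ω => |X ω| ^ b)
    filter_upwards [this] with ω hω
    simpa [Pi.smul_def, smul_eq_mul] using hω
  filter_upwards [h2, hge, hle, hneg, hmono, hsmul, hcond] with ω h2 hge hle hneg hmono hsmul hcond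
  rw [h2, abs_le]
  have hτb : (0:ℝ) ≤ τ ^ (1 - b) := (rpow_pos_of_pos hτ _).le
  have hub : (μ[fun ω' => |Y ω'| | m]) ω ≤ C * τ ^ (1 - b) := by
    calc (μ[fun ω' => |Y ω'| | m]) ω ≤ _ := hmono
      _ = τ ^ (1 - b) * (μ[fun ω' => |X ω'| ^ b | m]) ω := hsmul
      _ ≤ τ ^ (1 - b) * C := by nlinarith
      _ = C * τ ^ (1 - b) := mul_comm _ _
  constructor
  · have : -(μ[Y | m]) ω ≤ (μ[fun ω' => |Y ω'| | m]) ω := by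
      rw [← Pi.neg_apply, ← hneg]; exact hle
    linarith
  · linarith
end

section
/- Let (Ω, F, P) be a probability space, b ∈ (1, 2], τ > 0, and let X, Y : Ω → ℝ be random variables with E[|X|^b] < ∞ and E[|Y|^b] < ∞. Then ψ_τ(X)·Y is integrable and E[|ψ_τ(X)·Y|] ≤ 2 τ^{2−b} (E[|X|^b])^{(b−1)/b} (E[|Y|^b])^{1/b}. -/
/-!
Since `|ψ_τ(x)| ≤ min(τ, |x|)`, interpolating between the two bounds with weights `2 - b` and
`b - 1` gives `|ψ_τ(x)| ≤ τ^{2-b} |x|^{b-1}`. Hölder's inequality with the conjugate exponents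
`b / (b - 1)` and `b` then bounds `E[|X|^{b-1} |Y|]` by `(E|X|^b)^{(b-1)/b} (E|Y|^b)^{1/b}`;
the factor `2` is slack.
-/

open MeasureTheory Real

lemma le_rpow_mul_rpow_one_sub {a s t θ : ℝ} (ha : 0 ≤ a) (hs : a ≤ s) (ht : a ≤ t)
    (hθ₀ : 0 ≤ θ) (hθ₁ : θ ≤ 1) : a ≤ s ^ θ * t ^ (1 - θ) :=
  calc a = a ^ θ * a ^ (1 - θ) := by rw [← rpow_add' ha (by norm_num), add_sub_cancel, rpow_one]
    _ ≤ s ^ θ * t ^ (1 - θ) :=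
      mul_le_mul (rpow_le_rpow ha hs hθ₀) (rpow_le_rpow ha ht (by linarith)) (by positivity)
        (rpow_nonneg (ha.trans hs) _)

section truncFun

variable {τ : ℝ}

lemma abs_truncFun_le (hτ : 0 ≤ τ) (x : ℝ) : |truncFun τ x| ≤ τ := by
  unfold truncFun
  rw [abs_le]
  constructor <;> grind

lemma abs_truncFun_le_abs (hτ : 0 ≤ τ) (x : ℝ) : |truncFun τ x| ≤ |x| := by
  unfold truncFun
  rw [abs_le]
  constructor <;> grind

lemma abs_truncFun_le_rpow_mul_rpow (hτ : 0 ≤ τ) {b : ℝ} (hb₁ : 1 ≤ b) (hb₂ : b ≤ 2) (x : ℝ) :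
    |truncFun τ x| ≤ τ ^ (2 - b) * |x| ^ (b - 1) := by
  have := le_rpow_mul_rpow_one_sub (abs_nonneg _) (abs_truncFun_le hτ x)
    (abs_truncFun_le_abs hτ x) (sub_nonneg.2 hb₂) (by linarith)
  rwa [show 1 - (2 - b) = b - 1 by ring] at this

lemma measurable_truncFun (τ : ℝ) : Measurable (truncFun τ) :=
  measurable_const.max (measurable_id.min measurable_const)

end truncFun

section Holder

variable {α : Type*} [MeasurableSpace α] {μ : Measure α} {f g : α → ℝ} {b : ℝ}

lemma memLp_ofReal_of_integrable_abs_rpow (hf : AEStronglyMeasurable f μ) (hb : 0 < b)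
    (hfb : Integrable (fun x => |f x| ^ b) μ) : MemLp f (ENNReal.ofReal b) μ := by
  rw [← integrable_norm_rpow_iff hf (by simpa using hb) ENNReal.ofReal_ne_top,
    ENNReal.toReal_ofReal hb.le]
  exact hfb

lemma abs_rpow_sub_one_rpow_conjExponent (hb : 1 < b) (x : ℝ) :
    (|x| ^ (b - 1)) ^ conjExponent b = |x| ^ b := by
  rw [← rpow_mul (abs_nonneg x), conjExponent, mul_div_cancel₀ _ (by linarith)]

lemma memLp_abs_rpow_sub_one_conjExponent (hf : MemLp f (ENNReal.ofReal b) μ) (hb : 1 < b) :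
    MemLp (fun x => |f x| ^ (b - 1)) (ENNReal.ofReal (conjExponent b)) μ := by
  have hb₁ : 0 < b - 1 := by linarith
  have := hf.norm_rpow_div (ENNReal.ofReal (b - 1))
  rwa [ENNReal.toReal_ofReal hb₁.le, ← ENNReal.ofReal_div_of_pos hb₁] at this

theorem integrable_and_integral_abs_rpow_sub_one_mul_abs_le (hf : AEStronglyMeasurable f μ)
    (hg : AEStronglyMeasurable g μ) (hb : 1 < b) (hfb : Integrable (fun x => |f x| ^ b) μ)
    (hgb : Integrable (fun x => |g x| ^ b) μ) :
    Integrable (fun x => |f x| ^ (b - 1) * |g x|) μ ∧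
      ∫ x, |f x| ^ (b - 1) * |g x| ∂μ
        ≤ (∫ x, |f x| ^ b ∂μ) ^ ((b - 1) / b) * (∫ x, |g x| ^ b ∂μ) ^ (1 / b) := by
  have hconj : (conjExponent b).HolderConjugate b := (HolderConjugate.conjExponent hb).symm
  have hF := memLp_abs_rpow_sub_one_conjExponent
    (memLp_ofReal_of_integrable_abs_rpow hf (by linarith) hfb) hb
  have hG := (memLp_ofReal_of_integrable_abs_rpow hg (by linarith) hgb).abs
  refine ⟨?_, ?_⟩
  · have := hconj.ennrealOfReal
    exact memLp_one_iff_integrable.1 (hG.mul' (r := 1) hF)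
  · have := integral_mul_le_Lp_mul_Lq_of_nonneg hconj (ae_of_all _ fun x => by positivity)
      (ae_of_all _ fun x => abs_nonneg (g x)) hF hG
    simp_rw [abs_rpow_sub_one_rpow_conjExponent hb] at this
    rwa [conjExponent, one_div_div] at this

end Holder

theorem trunc_cross_moment_bound_general
    {Ω : Type*} [MeasurableSpace Ω] (μ : Measure Ω)
    (b τ : ℝ) (hb : b ∈ Set.Ioc (1 : ℝ) 2) (hτ : 0 < τ)
    (X Y : Ω → ℝ) (hX : Measurable X) (hY : Measurable Y)
    (hXb : Integrable (fun ω => |X ω| ^ b) μ)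
    (hYb : Integrable (fun ω => |Y ω| ^ b) μ) :
    Integrable (fun ω => truncFun τ (X ω) * Y ω) μ ∧
      ∫ ω, |truncFun τ (X ω) * Y ω| ∂μ
        ≤ 2 * τ ^ (2 - b) * (∫ ω, |X ω| ^ b ∂μ) ^ ((b - 1) / b)
            * (∫ ω, |Y ω| ^ b ∂μ) ^ (1 / b) := by
  obtain ⟨hb₁, hb₂⟩ := hb
  have hψ (ω : Ω) : |truncFun τ (X ω) * Y ω| ≤ τ ^ (2 - b) * (|X ω| ^ (b - 1) * |Y ω|) := by
    rw [abs_mul, ← mul_assoc]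
    exact mul_le_mul_of_nonneg_right
      (abs_truncFun_le_rpow_mul_rpow hτ.le hb₁.le hb₂ (X ω)) (abs_nonneg _)
  obtain ⟨hint, hHolder⟩ := integrable_and_integral_abs_rpow_sub_one_mul_abs_le
    hX.aestronglyMeasurable hY.aestronglyMeasurable hb₁ hXb hYb
  refine ⟨(hint.const_mul _).mono'
    (((measurable_truncFun τ).comp hX).mul hY).aestronglyMeasurable (ae_of_all _ hψ), ?_⟩
  have hbound_nonneg : 0 ≤ τ ^ (2 - b) * (∫ ω, |X ω| ^ b ∂μ) ^ ((b - 1) / b)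
      * (∫ ω, |Y ω| ^ b ∂μ) ^ (1 / b) := by positivity
  calc ∫ ω, |truncFun τ (X ω) * Y ω| ∂μ
      ≤ ∫ ω, τ ^ (2 - b) * (|X ω| ^ (b - 1) * |Y ω|) ∂μ :=
        integral_mono_of_nonneg (ae_of_all _ fun _ => abs_nonneg _) (hint.const_mul _)
          (ae_of_all _ hψ)
    _ = τ ^ (2 - b) * ∫ ω, |X ω| ^ (b - 1) * |Y ω| ∂μ := integral_const_mul _ _
    _ ≤ τ ^ (2 - b) * ((∫ ω, |X ω| ^ b ∂μ) ^ ((b - 1) / b) * (∫ ω, |Y ω| ^ b ∂μ) ^ (1 / b)) := by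
        gcongr
    _ ≤ 2 * τ ^ (2 - b) * (∫ ω, |X ω| ^ b ∂μ) ^ ((b - 1) / b)
          * (∫ ω, |Y ω| ^ b ∂μ) ^ (1 / b) := by linarith

theorem trunc_cross_moment_bound
    {Ω : Type*} [MeasurableSpace Ω] (μ : Measure Ω) [IsProbabilityMeasure μ]
    (b τ : ℝ) (hb : b ∈ Set.Ioc (1 : ℝ) 2) (hτ : 0 < τ)
    (X Y : Ω → ℝ) (hX : Measurable X) (hY : Measurable Y)
    (hXb : Integrable (fun ω => |X ω| ^ b) μ)
    (hYb : Integrable (fun ω => |Y ω| ^ b) μ) :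
    Integrable (fun ω => truncFun τ (X ω) * Y ω) μ ∧
      ∫ ω, |truncFun τ (X ω) * Y ω| ∂μ
        ≤ 2 * τ ^ (2 - b) * (∫ ω, |X ω| ^ b ∂μ) ^ ((b - 1) / b)
            * (∫ ω, |Y ω| ^ b ∂μ) ^ (1 / b) :=
  trunc_cross_moment_bound_general μ b τ hb hτ X Y hX hY hXb hYb
end

section
/- Let b ∈ (3/2, 2], δ > 0, and K₁, K₂ ≥ 0. Let (A_n)_{n ≥ 1} be real random variables on a probability space with E[|A_n|^{2b}] ≤ K₁ n and E[A_n²] ≤ K₂ for all n ≥ 1. Then E[A_n² · 1_{|A_n| ≥ δ n}] ≤ K₁^{1/b} K₂^{(b−1)/b} δ^{−2(b−1)/b} n^{(3−2b)/b} for all n ≥ 1, and in particular E[A_n² · 1_{|A_n| ≥ δ n}] → 0 as n → ∞. -/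
/-!
On the tail event `{δ n ≤ |A n|}`, Hölder's inequality with exponents `b` and `b / (b - 1)` bounds
`∫ A n ^ 2` by `(∫ |A n| ^ (2b)) ^ (1/b) * P(tail) ^ ((b - 1)/b)`, and Chebyshev's inequality gives
`P(tail) ≤ K₂ / (δ n) ^ 2`. Together with `∫ |A n| ^ (2b) ≤ K₁ n` this leaves the power
`n ^ (1/b - 2(b - 1)/b) = n ^ ((3 - 2b)/b)`, which tends to `0` because `b > 3/2`.
-/

open MeasureTheory Real Filter

section TailMoments

variable {α : Type*} [MeasurableSpace α] {μ : Measure α}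

lemma sq_rpow_eq_abs_rpow_two_mul (x p : ℝ) : (x ^ 2) ^ p = |x| ^ (2 * p) := by
  rw [← sq_abs, ← Real.rpow_natCast, ← Real.rpow_mul (abs_nonneg x), Nat.cast_ofNat]

theorem setIntegral_le_integral_rpow_mul_measureReal_rpow {f : α → ℝ} {p : ℝ} (hp : 1 < p)
    (hf_nonneg : ∀ x, 0 ≤ f x) (hf_meas : AEStronglyMeasurable f μ)
    (hf : Integrable (fun x => f x ^ p) μ) {s : Set α} (hs : MeasurableSet s) (hμs : μ s ≠ ⊤) :
    ∫ x in s, f x ∂μ ≤ (∫ x, f x ^ p ∂μ) ^ (1 / p) * μ.real s ^ ((p - 1) / p) := by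
  set q := p / (p - 1) with hq
  have hpq : p.HolderConjugate q := (Real.holderConjugate_iff_eq_conjExponent hp).mpr hq
  have hp0 : 0 < p := by linarith
  have hf_memLp : MemLp f (ENNReal.ofReal p) μ := by
    refine (integrable_norm_rpow_iff hf_meas (by simpa using hp0) ENNReal.ofReal_ne_top).mp ?_
    simpa only [Real.norm_of_nonneg (hf_nonneg _), ENNReal.toReal_ofReal hp0.le] using hf
  have h_ind : ∀ x, s.indicator (fun _ => (1 : ℝ)) x ^ q = s.indicator (fun _ => 1) x := by
    intro x
    by_cases hx : x ∈ s <;> simp [hx, Real.zero_rpow hpq.symm.ne_zero]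
  calc ∫ x in s, f x ∂μ = ∫ x, f x * s.indicator (fun _ => (1 : ℝ)) x ∂μ := by
        rw [← integral_indicator hs]
        congr 1 with x
        by_cases hx : x ∈ s <;> simp [hx]
    _ ≤ (∫ x, f x ^ p ∂μ) ^ (1 / p) * (∫ x, s.indicator (fun _ => (1 : ℝ)) x ^ q ∂μ) ^ (1 / q) :=
        integral_mul_le_Lp_mul_Lq_of_nonneg hpq (ae_of_all _ hf_nonneg)
          (ae_of_all _ (Set.indicator_nonneg fun _ _ => zero_le_one))
          hf_memLp (memLp_indicator_const _ hs 1 (Or.inr hμs))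
    _ = (∫ x, f x ^ p ∂μ) ^ (1 / p) * μ.real s ^ ((p - 1) / p) := by
        simp_rw [h_ind, hq, one_div_div]
        rw [integral_indicator_const (1 : ℝ) hs, smul_eq_mul, mul_one]

theorem measureReal_abs_ge_le_integral_sq_div_sq {X : α → ℝ}
    (hX : Integrable (fun x => X x ^ 2) μ) {t : ℝ} (ht : 0 < t) :
    μ.real {x | t ≤ |X x|} ≤ (∫ x, X x ^ 2 ∂μ) / t ^ 2 := by
  have h_set : {x | t ≤ |X x|} = {x | t ^ 2 ≤ X x ^ 2} := by
    ext x
    simp only [Set.mem_ofPred_eq, ← sq_abs (X x)]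
    exact (pow_le_pow_iff_left₀ ht.le (abs_nonneg _) two_ne_zero).symm
  rw [le_div_iff₀ (by positivity), mul_comm, h_set]
  exact mul_meas_ge_le_integral_of_nonneg (ae_of_all _ fun x => sq_nonneg (X x)) hX _

theorem setIntegral_sq_abs_ge_le [IsFiniteMeasure μ] {X : α → ℝ} (hX : Measurable X) {p t : ℝ}
    (hp : 1 < p) (hint : Integrable (fun x => |X x| ^ (2 * p)) μ) (ht : 0 < t) :
    ∫ x in {x | t ≤ |X x|}, X x ^ 2 ∂μ
      ≤ (∫ x, |X x| ^ (2 * p) ∂μ) ^ (1 / p) * ((∫ x, X x ^ 2 ∂μ) / t ^ 2) ^ ((p - 1) / p) := by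
  have hp0 : 0 < p := by linarith
  have h_sq : Integrable (fun x => X x ^ 2) μ := by
    have := integrable_norm_rpow_of_le hX.aestronglyMeasurable zero_le_two (by linarith)
      (by linarith : (2 : ℝ) ≤ 2 * p) (by simpa only [Real.norm_eq_abs] using hint)
    simpa only [Real.norm_eq_abs, sq_abs, Real.rpow_two] using this
  have h_holder := setIntegral_le_integral_rpow_mul_measureReal_rpow hp (fun x => sq_nonneg (X x))
    (hX.pow_const 2).aestronglyMeasurable (by simpa only [sq_rpow_eq_abs_rpow_two_mul] using hint)
    (s := {x | t ≤ |X x|}) (measurableSet_le measurable_const hX.abs) (measure_ne_top μ _)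
  simp only [sq_rpow_eq_abs_rpow_two_mul] at h_holder
  refine h_holder.trans (mul_le_mul_of_nonneg_left ?_ (by positivity))
  exact Real.rpow_le_rpow measureReal_nonneg (measureReal_abs_ge_le_integral_sq_div_sq h_sq ht)
    (div_nonneg (by linarith) hp0.le)

end TailMoments

lemma mul_rpow_mul_div_sq_rpow {K₁ K₂ δ x b : ℝ} (hK₁ : 0 ≤ K₁) (hK₂ : 0 ≤ K₂) (hδ : 0 < δ)
    (hx : 0 < x) (hb : b ≠ 0) :
    (K₁ * x) ^ (1 / b) * (K₂ / (δ * x) ^ 2) ^ ((b - 1) / b)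
      = K₁ ^ (1 / b) * K₂ ^ ((b - 1) / b) * δ ^ (-(2 * (b - 1) / b)) * x ^ ((3 - 2 * b) / b) := by
  have h_exp : (3 - 2 * b) / b = 1 / b + -(2 * ((b - 1) / b)) := by field_simp; ring
  rw [h_exp, Real.mul_rpow hK₁ hx.le, Real.div_rpow hK₂ (by positivity), ← Real.rpow_two,
    Real.mul_rpow hδ.le hx.le, Real.mul_rpow (by positivity) (by positivity),
    ← Real.rpow_mul hδ.le, ← Real.rpow_mul hx.le, Real.rpow_add hx, Real.rpow_neg hx.le,
    Real.rpow_neg hδ.le, mul_div_assoc]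
  field_simp

theorem lindeberg_condition_verification
    {Ω : Type*} [MeasurableSpace Ω] (μ : Measure Ω) [IsProbabilityMeasure μ]
    (b δ K₁ K₂ : ℝ) (hb : b ∈ Set.Ioc (3 / 2 : ℝ) 2) (hδ : 0 < δ)
    (hK₁ : 0 ≤ K₁) (hK₂ : 0 ≤ K₂)
    (A : ℕ → Ω → ℝ) (hA : ∀ n, Measurable (A n))
    (hAint : ∀ n, Integrable (fun ω => |A n ω| ^ (2 * b)) μ)
    (hmom : ∀ n : ℕ, 1 ≤ n → ∫ ω, |A n ω| ^ (2 * b) ∂μ ≤ K₁ * n)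
    (hvar : ∀ n : ℕ, 1 ≤ n → ∫ ω, (A n ω) ^ 2 ∂μ ≤ K₂) :
    (∀ n : ℕ, 1 ≤ n →
      ∫ ω in {ω | δ * n ≤ |A n ω|}, (A n ω) ^ 2 ∂μ
        ≤ K₁ ^ (1 / b) * K₂ ^ ((b - 1) / b) * δ ^ (-(2 * (b - 1) / b))
            * (n : ℝ) ^ ((3 - 2 * b) / b)) ∧
    Tendsto (fun n : ℕ => ∫ ω in {ω | δ * n ≤ |A n ω|}, (A n ω) ^ 2 ∂μ)
      atTop (nhds 0) := by
  obtain ⟨hb_low, -⟩ := hb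
  have hb0 : 0 < b := by linarith
  have h_bound : ∀ n : ℕ, 1 ≤ n → ∫ ω in {ω | δ * n ≤ |A n ω|}, (A n ω) ^ 2 ∂μ
      ≤ K₁ ^ (1 / b) * K₂ ^ ((b - 1) / b) * δ ^ (-(2 * (b - 1) / b))
          * (n : ℝ) ^ ((3 - 2 * b) / b) := by
    intro n hn
    have hn0 : (0 : ℝ) < n := by exact_mod_cast hn
    rw [← mul_rpow_mul_div_sq_rpow hK₁ hK₂ hδ hn0 hb0.ne']
    refine (setIntegral_sq_abs_ge_le (hA n) (by linarith) (hAint n) (by positivity)).trans ?_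
    gcongr
    exacts [hmom n hn, div_nonneg (by linarith) hb0.le, hvar n hn]
  refine ⟨h_bound, tendsto_of_tendsto_of_tendsto_of_le_of_le' tendsto_const_nhds ?_
    (Eventually.of_forall fun n => integral_nonneg fun ω => sq_nonneg _)
    (eventually_atTop.mpr ⟨1, h_bound⟩)⟩
  have h_exp : (3 - 2 * b) / b = -((2 * b - 3) / b) := by ring
  simpa only [h_exp, mul_zero, Function.comp_def] using
    ((tendsto_rpow_neg_atTop (by apply div_pos <;> linarith)).comp
      tendsto_natCast_atTop_atTop).const_mul
      (K₁ ^ (1 / b) * K₂ ^ ((b - 1) / b) * δ ^ (-(2 * (b - 1) / b)))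
end

section
/- Let (Ω, F, P) be a probability space with a filtration (F_i)_{i ≥ 0}, b ∈ (1, 2], c > 0, C ≥ 0, and let (D_i)_{i ≥ 1} be random variables such that each D_i is F_i-measurable and integrable with E[|D_i|^b] < ∞, E[D_i | F_{i−1}] = 0 almost surely, and E[|D_i|^b | F_{i−1}] ≤ C almost surely for every i. For n ≥ 1 set τ_n = c n^{1/b}. Then for every λ > 0 and every n ≥ 1, P( | (1/n) Σ_{i=1}^n ψ_{τ_n}(D_i) | ≥ λ n^{(1−b)/b} ) ≤ ( √C · c^{(2−b)/2} + C · c^{1−b} )² / λ². -/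
open MeasureTheory Real

/-!
Write `Y i = ψ_τ (D i)` and split it as `X i + M i` with `M i = E[Y i | ℱ i]`. Since
`E[D i | ℱ i] = 0`, the conditional mean `M i` equals the conditional bias `E[Y i - D i | ℱ i]`, and
`|ψ_τ x - x| ≤ |x| ^ b τ ^ (1 - b)` gives `|M i| ≤ C τ ^ (1 - b)`. The `X i` are martingale
differences, hence orthogonal in `L²`, with `E[X i ^ 2] ≤ E[Y i ^ 2] ≤ C τ ^ (2 - b)` because
`ψ_τ x ^ 2 ≤ |x| ^ b τ ^ (2 - b)`. So the average of the `Y i` has `L²` norm at most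
`√(C τ ^ (2 - b) / n) + C τ ^ (1 - b)`, which for `τ = c n ^ (1 / b)` equals
`(√C c ^ ((2 - b) / 2) + C c ^ (1 - b)) n ^ ((1 - b) / b)`; Chebyshev's inequality concludes.
-/

open Filter Finset ProbabilityTheory

lemma continuous_truncFun (τ : ℝ) : Continuous (truncFun τ) :=
  continuous_const.max (continuous_id.min continuous_const)

lemma truncFun_eq_self_of_abs_le {τ x : ℝ} (h : |x| ≤ τ) : truncFun τ x = x := by
  rw [abs_le] at h
  rw [truncFun, min_eq_left h.2, max_eq_right h.1]

lemma abs_truncFun {τ : ℝ} (hτ : 0 ≤ τ) (x : ℝ) : |truncFun τ x| = min |x| τ := by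
  simp only [truncFun, abs_eq_max_neg, max_def, min_def]
  split_ifs <;> linarith

lemma abs_truncFun_sub_le_abs {τ : ℝ} (hτ : 0 ≤ τ) (x : ℝ) : |truncFun τ x - x| ≤ |x| := by
  simp only [truncFun, abs_eq_max_neg, max_def, min_def]
  split_ifs <;> linarith

lemma truncFun_sq_le {b τ : ℝ} (hb₀ : 0 ≤ b) (hb₂ : b ≤ 2) (hτ : 0 ≤ τ) (x : ℝ) :
    truncFun τ x ^ 2 ≤ |x| ^ b * τ ^ (2 - b) := by
  have hm : 0 ≤ min |x| τ := le_min (abs_nonneg x) hτ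
  calc truncFun τ x ^ 2 = min |x| τ ^ (b + (2 - b)) := by
        rw [← sq_abs, abs_truncFun hτ, add_sub_cancel, rpow_two]
    _ = min |x| τ ^ b * min |x| τ ^ (2 - b) := rpow_add' hm (by norm_num)
    _ ≤ |x| ^ b * τ ^ (2 - b) := by
        gcongr ?_ * ?_
        · exact rpow_le_rpow hm (min_le_left _ _) hb₀
        · exact rpow_le_rpow hm (min_le_right _ _) (by linarith)

lemma abs_truncFun_sub_le {b τ : ℝ} (hb : 1 ≤ b) (hτ : 0 < τ) (x : ℝ) :
    |truncFun τ x - x| ≤ |x| ^ b * τ ^ (1 - b) := by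
  rcases le_or_gt |x| τ with h | h
  · rw [truncFun_eq_self_of_abs_le h, sub_self, abs_zero]
    positivity
  calc |truncFun τ x - x| ≤ |x| ^ (b + (1 - b)) := by
        rw [add_sub_cancel, rpow_one]; exact abs_truncFun_sub_le_abs hτ.le x
    _ = |x| ^ b * |x| ^ (1 - b) := rpow_add' (abs_nonneg x) (by norm_num)
    _ ≤ |x| ^ b * τ ^ (1 - b) := by
        gcongr ?_ * ?_
        exact rpow_le_rpow_of_nonpos hτ h.le (by linarith)

section Moments

variable {Ω : Type*} {mΩ : MeasurableSpace Ω} {μ : Measure Ω}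

lemma integral_add_sq_of_integral_mul_eq_zero {f g : Ω → ℝ} (hf : MemLp f 2 μ)
    (hg : MemLp g 2 μ) (h : ∫ ω, f ω * g ω ∂μ = 0) :
    ∫ ω, (f ω + g ω) ^ 2 ∂μ = ∫ ω, f ω ^ 2 ∂μ + ∫ ω, g ω ^ 2 ∂μ := by
  have hfg : Integrable (fun ω => 2 * (f ω * g ω)) μ := (hf.integrable_mul hg).const_mul 2
  calc ∫ ω, (f ω + g ω) ^ 2 ∂μ = ∫ ω, f ω ^ 2 + 2 * (f ω * g ω) + g ω ^ 2 ∂μ := by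
        congr with ω; ring
    _ = ∫ ω, f ω ^ 2 ∂μ + ∫ ω, g ω ^ 2 ∂μ := by
        have hf2g : Integrable (fun ω => f ω ^ 2 + 2 * (f ω * g ω)) μ := hf.integrable_sq.add hfg
        rw [integral_add hf2g hg.integrable_sq,
          integral_add hf.integrable_sq hfg, integral_const_mul, h, mul_zero, add_zero]

lemma sq_integral_abs_le_integral_sq [IsProbabilityMeasure μ] {f : Ω → ℝ} (hf : MemLp f 2 μ) :
    (∫ ω, |f ω| ∂μ) ^ 2 ≤ ∫ ω, f ω ^ 2 ∂μ := by
  have h := variance_nonneg |f| μ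
  rw [variance_eq_sub hf.abs] at h
  simpa [sq_abs] using h

lemma integral_add_sq_le_of_ae_abs_le [IsProbabilityMeasure μ] {f g : Ω → ℝ} {B : ℝ}
    (hf : MemLp f 2 μ) (hg : AEStronglyMeasurable g μ) (hgB : ∀ᵐ ω ∂μ, |g ω| ≤ B) :
    ∫ ω, (f ω + g ω) ^ 2 ∂μ ≤ (√(∫ ω, f ω ^ 2 ∂μ) + B) ^ 2 := by
  obtain ⟨ω₀, hω₀⟩ := hgB.exists
  have hB : 0 ≤ B := (abs_nonneg _).trans hω₀
  have hg2 : MemLp g 2 μ := MemLp.of_bound hg B (by simpa only [Real.norm_eq_abs] using hgB)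
  have hf2 : 0 ≤ ∫ ω, f ω ^ 2 ∂μ := integral_nonneg fun ω => sq_nonneg _
  have hf1 : ∫ ω, |f ω| ∂μ ≤ √(∫ ω, f ω ^ 2 ∂μ) :=
    le_sqrt_of_sq_le (sq_integral_abs_le_integral_sq hf)
  have hfB₁ : Integrable (fun ω => 2 * B * |f ω|) μ := (hf.integrable one_le_two).abs.const_mul _
  have hfB₂ : Integrable (fun ω => f ω ^ 2 + 2 * B * |f ω|) μ := hf.integrable_sq.add hfB₁
  calc ∫ ω, (f ω + g ω) ^ 2 ∂μ ≤ ∫ ω, f ω ^ 2 + 2 * B * |f ω| + B ^ 2 ∂μ := by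
        refine integral_mono_ae (hf.add hg2).integrable_sq (hfB₂.add (integrable_const _)) ?_
        filter_upwards [hgB] with ω hω
        calc (f ω + g ω) ^ 2 ≤ (|f ω| + B) ^ 2 := by
              rw [← sq_abs]
              gcongr
              exact (abs_add_le _ _).trans (by linarith)
          _ = _ := by rw [add_sq, sq_abs]; ring
    _ = ∫ ω, f ω ^ 2 ∂μ + 2 * B * ∫ ω, |f ω| ∂μ + B ^ 2 := by
        rw [integral_add hfB₂ (integrable_const _), integral_add hf.integrable_sq hfB₁,
          integral_const_mul, integral_const, probReal_univ, one_smul]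
    _ ≤ (√(∫ ω, f ω ^ 2 ∂μ) + B) ^ 2 := by
        rw [add_sq, sq_sqrt hf2]
        nlinarith

lemma measureReal_abs_ge_le_integral_sq_div [IsFiniteMeasure μ] {f : Ω → ℝ} (hf : MemLp f 2 μ)
    {ε : ℝ} (hε : 0 < ε) :
    μ.real {ω | ε ≤ |f ω|} ≤ (∫ ω, f ω ^ 2 ∂μ) / ε ^ 2 := by
  have hsub : {ω | ε ≤ |f ω|} ⊆ {ω | ε ^ 2 ≤ f ω ^ 2} := fun ω (hω : ε ≤ |f ω|) =>
    show ε ^ 2 ≤ f ω ^ 2 from sq_abs (f ω) ▸ pow_le_pow_left₀ hε.le hω 2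
  rw [le_div_iff₀ (by positivity), mul_comm]
  calc ε ^ 2 * μ.real {ω | ε ≤ |f ω|} ≤ ε ^ 2 * μ.real {ω | ε ^ 2 ≤ f ω ^ 2} := by
        gcongr
        exact measure_ne_top _ _
    _ ≤ ∫ ω, f ω ^ 2 ∂μ :=
        mul_meas_ge_le_integral_of_nonneg (ae_of_all _ fun ω => sq_nonneg _) hf.integrable_sq _

lemma integral_mul_eq_zero_of_condExp_eq_zero {m : MeasurableSpace Ω} (hm : m ≤ mΩ)
    [SigmaFinite (μ.trim hm)] {f g : Ω → ℝ} (hf : StronglyMeasurable[m] f)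
    (hfg : Integrable (f * g) μ) (hg : Integrable g μ) (hg₀ : μ[g|m] =ᵐ[μ] 0) :
    ∫ ω, f ω * g ω ∂μ = 0 := by
  calc ∫ ω, f ω * g ω ∂μ = ∫ ω, μ[f * g|m] ω ∂μ := (integral_condExp hm).symm
    _ = ∫ _, (0 : ℝ) ∂μ := by
        refine integral_congr_ae ?_
        filter_upwards [condExp_mul_of_stronglyMeasurable_left hf hfg hg, hg₀] with ω h h₀
        simp [h, h₀]
    _ = 0 := integral_zero _ _

lemma integral_sq_sum_eq_sum_integral_sq [IsFiniteMeasure μ] {ℱ : Filtration ℕ mΩ}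
    {X : ℕ → Ω → ℝ} (hX : ∀ i, StronglyMeasurable[ℱ (i + 1)] (X i))
    (hX₂ : ∀ i, MemLp (X i) 2 μ) (hX₀ : ∀ i, μ[X i|ℱ i] =ᵐ[μ] 0) (n : ℕ) :
    ∫ ω, (∑ i ∈ range n, X i ω) ^ 2 ∂μ = ∑ i ∈ range n, ∫ ω, X i ω ^ 2 ∂μ := by
  induction n with
  | zero => simp
  | succ n ih =>
    have hS : StronglyMeasurable[ℱ n] (fun ω => ∑ i ∈ range n, X i ω) :=
      Finset.stronglyMeasurable_fun_sum _ fun i hi =>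
        (hX i).mono (ℱ.mono (Nat.succ_le_of_lt (mem_range.1 hi)))
    have hS₂ : MemLp (fun ω => ∑ i ∈ range n, X i ω) 2 μ :=
      memLp_finsetSum _ fun i _ => hX₂ i
    have horth := integral_mul_eq_zero_of_condExp_eq_zero (ℱ.le n) hS
      (hS₂.integrable_mul (hX₂ n)) ((hX₂ n).integrable one_le_two) (hX₀ n)
    simp only [sum_range_succ]
    rw [integral_add_sq_of_integral_mul_eq_zero hS₂ (hX₂ n) horth, ih]

lemma integral_sq_sub_condExp_le [IsFiniteMeasure μ] {m : MeasurableSpace Ω} (hm : m ≤ mΩ)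
    {f : Ω → ℝ} (hf : MemLp f 2 μ) :
    ∫ ω, (f ω - μ[f|m] ω) ^ 2 ∂μ ≤ ∫ ω, f ω ^ 2 ∂μ :=
  calc ∫ ω, (f ω - μ[f|m] ω) ^ 2 ∂μ = ∫ ω, Var[f; μ | m] ω ∂μ := (integral_condExp hm).symm
    _ ≤ ∫ ω, μ[f ^ 2|m] ω ∂μ :=
        integral_mono_ae integrable_condVar integrable_condExp (condVar_ae_le_condExp_sq hm hf)
    _ = ∫ ω, f ω ^ 2 ∂μ := integral_condExp hm

lemma condExp_sub_condExp_ae_eq_zero {m : MeasurableSpace Ω} (hm : m ≤ mΩ)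
    [SigmaFinite (μ.trim hm)] {f : Ω → ℝ} (hf : Integrable f μ) :
    μ[f - μ[f|m]|m] =ᵐ[μ] 0 := by
  filter_upwards [condExp_sub hf integrable_condExp m] with ω h
  rw [h, condExp_of_stronglyMeasurable hm stronglyMeasurable_condExp integrable_condExp]
  simp

lemma integral_le_of_ae_condExp_le [IsProbabilityMeasure μ] {m : MeasurableSpace Ω}
    (hm : m ≤ mΩ) {f : Ω → ℝ} {C : ℝ} (hC : ∀ᵐ ω ∂μ, μ[f|m] ω ≤ C) : ∫ ω, f ω ∂μ ≤ C :=
  calc ∫ ω, f ω ∂μ = ∫ ω, μ[f|m] ω ∂μ := (integral_condExp hm).symm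
    _ ≤ ∫ _, C ∂μ := integral_mono_ae integrable_condExp (integrable_const C) hC
    _ = C := by simp

end Moments

section Truncation

variable {Ω : Type*} {mΩ : MeasurableSpace Ω} {μ : Measure Ω} {D : Ω → ℝ} {b τ C : ℝ}

lemma integrable_truncFun_comp (hτ : 0 ≤ τ) (hD : Integrable D μ) :
    Integrable (fun ω => truncFun τ (D ω)) μ :=
  hD.mono ((continuous_truncFun τ).comp_aestronglyMeasurable hD.1) <| ae_of_all _ fun ω => by
    simp only [Real.norm_eq_abs, abs_truncFun hτ]
    exact min_le_left _ _

lemma memLp_truncFun_comp [IsFiniteMeasure μ] (hτ : 0 ≤ τ) (hD : AEStronglyMeasurable D μ)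
    (p : ENNReal) : MemLp (fun ω => truncFun τ (D ω)) p μ :=
  MemLp.of_bound ((continuous_truncFun τ).comp_aestronglyMeasurable hD) τ <|
    ae_of_all _ fun ω => by
      simp only [Real.norm_eq_abs, abs_truncFun hτ]
      exact min_le_right _ _

lemma ae_abs_condExp_truncFun_le {m : MeasurableSpace Ω} (hb : 1 ≤ b) (hτ : 0 < τ)
    (hD : Integrable D μ) (hDb : Integrable (fun ω => |D ω| ^ b) μ) (hD₀ : μ[D|m] =ᵐ[μ] 0)
    (hC : ∀ᵐ ω ∂μ, μ[fun ω => |D ω| ^ b|m] ω ≤ C) :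
    ∀ᵐ ω ∂μ, |μ[fun ω => truncFun τ (D ω)|m] ω| ≤ C * τ ^ (1 - b) := by
  set Y := fun ω => truncFun τ (D ω)
  have hY : Integrable Y μ := integrable_truncFun_comp hτ.le hD
  have hbias : μ[Y|m] =ᵐ[μ] μ[Y - D|m] := by
    filter_upwards [condExp_sub hY hD m, hD₀] with ω h h₀
    simp [h, h₀]
  have hmono : μ[(|Y - D|) | m] ≤ᵐ[μ] μ[fun ω => τ ^ (1 - b) * |D ω| ^ b|m] :=
    condExp_mono (hY.sub hD).abs (hDb.const_mul _) <| ae_of_all _ fun ω =>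
      (abs_truncFun_sub_le hb hτ (D ω)).trans_eq (mul_comm _ _)
  have hpull : μ[fun ω => τ ^ (1 - b) * |D ω| ^ b|m]
      =ᵐ[μ] τ ^ (1 - b) • μ[fun ω => |D ω| ^ b|m] :=
    condExp_smul (τ ^ (1 - b)) (fun ω => |D ω| ^ b) m
  filter_upwards [hbias, abs_condExp_ae_le_condExp_abs (m := m) (μ := μ) (Y - D), hmono, hpull, hC]
    with ω h₁ h₂ h₃ h₄ h₅
  calc |μ[Y|m] ω| = |μ[Y - D|m] ω| := by rw [h₁]
    _ ≤ μ[(|Y - D|) | m] ω := h₂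
    _ ≤ τ ^ (1 - b) * μ[fun ω => |D ω| ^ b|m] ω := h₃.trans_eq h₄
    _ ≤ τ ^ (1 - b) * C := by gcongr
    _ = C * τ ^ (1 - b) := mul_comm _ _

lemma integral_truncFun_sq_le (hb₀ : 0 ≤ b) (hb₂ : b ≤ 2) (hτ : 0 ≤ τ)
    (hDb : Integrable (fun ω => |D ω| ^ b) μ) (hC : ∫ ω, |D ω| ^ b ∂μ ≤ C) :
    ∫ ω, truncFun τ (D ω) ^ 2 ∂μ ≤ C * τ ^ (2 - b) :=
  calc ∫ ω, truncFun τ (D ω) ^ 2 ∂μ ≤ ∫ ω, |D ω| ^ b * τ ^ (2 - b) ∂μ :=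
        integral_mono_of_nonneg (ae_of_all _ fun _ => sq_nonneg _) (hDb.mul_const _)
          (ae_of_all _ fun ω => truncFun_sq_le hb₀ hb₂ hτ (D ω))
    _ = (∫ ω, |D ω| ^ b ∂μ) * τ ^ (2 - b) := integral_mul_const _ _
    _ ≤ C * τ ^ (2 - b) := by gcongr

end Truncation

section Average

variable {Ω : Type*} {mΩ : MeasurableSpace Ω} {μ : Measure Ω} [IsProbabilityMeasure μ]
  {ℱ : Filtration ℕ mΩ}

lemma integral_sq_average_add_le {X M : ℕ → Ω → ℝ} {v B : ℝ}
    (hX : ∀ i, StronglyMeasurable[ℱ (i + 1)] (X i)) (hX₂ : ∀ i, MemLp (X i) 2 μ)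
    (hX₀ : ∀ i, μ[X i|ℱ i] =ᵐ[μ] 0) (hXv : ∀ i, ∫ ω, X i ω ^ 2 ∂μ ≤ v)
    (hM : ∀ i, AEStronglyMeasurable (M i) μ) (hMB : ∀ i, ∀ᵐ ω ∂μ, |M i ω| ≤ B)
    {n : ℕ} (hn : 0 < n) :
    ∫ ω, ((1 / n) * ∑ i ∈ range n, (X i ω + M i ω)) ^ 2 ∂μ ≤ (√(v / n) + B) ^ 2 := by
  have hn₀ : (0 : ℝ) < n := by exact_mod_cast hn
  have hXn : ∫ ω, ((1 / n) * ∑ i ∈ range n, X i ω) ^ 2 ∂μ ≤ v / n :=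
    calc ∫ ω, ((1 / n) * ∑ i ∈ range n, X i ω) ^ 2 ∂μ
        = (1 / n) ^ 2 * ∑ i ∈ range n, ∫ ω, X i ω ^ 2 ∂μ := by
          simp only [mul_pow]
          rw [integral_const_mul, integral_sq_sum_eq_sum_integral_sq hX hX₂ hX₀]
      _ ≤ (1 / n) ^ 2 * (n * v) := by
          gcongr
          simpa using sum_le_sum fun i (_ : i ∈ range n) => hXv i
      _ = v / n := by field_simp
  have hMn : ∀ᵐ ω ∂μ, |(1 / n) * ∑ i ∈ range n, M i ω| ≤ B := by
    filter_upwards [ae_all_iff.2 hMB] with ω hω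
    rw [abs_mul, abs_of_pos (by positivity), one_div_mul_eq_div, div_le_iff₀ hn₀]
    calc |∑ i ∈ range n, M i ω| ≤ ∑ i ∈ range n, |M i ω| := abs_sum_le_sum_abs _ _
      _ ≤ B * n := by simpa [mul_comm] using sum_le_sum fun i (_ : i ∈ range n) => hω i
  calc ∫ ω, ((1 / n) * ∑ i ∈ range n, (X i ω + M i ω)) ^ 2 ∂μ
      = ∫ ω, ((1 / n) * ∑ i ∈ range n, X i ω + (1 / n) * ∑ i ∈ range n, M i ω) ^ 2 ∂μ := by
        simp only [sum_add_distrib, mul_add]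
    _ ≤ (√(∫ ω, ((1 / n) * ∑ i ∈ range n, X i ω) ^ 2 ∂μ) + B) ^ 2 :=
        integral_add_sq_le_of_ae_abs_le ((memLp_finsetSum _ fun i _ => hX₂ i).const_mul _)
          ((Finset.aestronglyMeasurable_fun_sum _ fun i _ => hM i).const_mul _) hMn
    _ ≤ (√(v / n) + B) ^ 2 := by
        obtain ⟨ω, hω⟩ := (hMB 0).exists
        have hB : 0 ≤ B := (abs_nonneg _).trans hω
        gcongr

theorem integral_sq_average_truncFun_le {D : ℕ → Ω → ℝ} {b C τ : ℝ} (hb : b ∈ Set.Ioc 1 2)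
    (hτ : 0 < τ) (hmeas : ∀ i, Measurable[ℱ (i + 1)] (D i)) (hint : ∀ i, Integrable (D i) μ)
    (hintb : ∀ i, Integrable (fun ω => |D i ω| ^ b) μ) (hzero : ∀ i, μ[D i|ℱ i] =ᵐ[μ] 0)
    (hcond : ∀ i, ∀ᵐ ω ∂μ, μ[fun ω' => |D i ω'| ^ b|ℱ i] ω ≤ C) {n : ℕ} (hn : 0 < n) :
    ∫ ω, ((1 / n) * ∑ i ∈ range n, truncFun τ (D i ω)) ^ 2 ∂μ
      ≤ (√(C * τ ^ (2 - b) / n) + C * τ ^ (1 - b)) ^ 2 := by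
  obtain ⟨hb₁, hb₂⟩ := hb
  set Y : ℕ → Ω → ℝ := fun i ω => truncFun τ (D i ω)
  set M : ℕ → Ω → ℝ := fun i => μ[Y i|ℱ i]
  have hY : ∀ i, MemLp (Y i) 2 μ := fun i => memLp_truncFun_comp hτ.le (hint i).1 2
  have hX : ∀ i, StronglyMeasurable[ℱ (i + 1)] (Y i - M i) := fun i =>
    ((continuous_truncFun τ).measurable.comp (hmeas i)).stronglyMeasurable.sub
      (stronglyMeasurable_condExp.mono (ℱ.mono i.le_succ))
  have hX₂ : ∀ i, MemLp (Y i - M i) 2 μ := fun i => (hY i).sub ((hY i).condExp one_le_two)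
  have hX₀ : ∀ i, μ[Y i - M i|ℱ i] =ᵐ[μ] 0 := fun i =>
    condExp_sub_condExp_ae_eq_zero (ℱ.le i) ((hY i).integrable one_le_two)
  have hXv : ∀ i, ∫ ω, (Y i - M i) ω ^ 2 ∂μ ≤ C * τ ^ (2 - b) := fun i =>
    (integral_sq_sub_condExp_le (ℱ.le i) (hY i)).trans <|
      integral_truncFun_sq_le (by linarith) hb₂ hτ.le (hintb i)
        (integral_le_of_ae_condExp_le (ℱ.le i) (hcond i))
  have hMB : ∀ i, ∀ᵐ ω ∂μ, |M i ω| ≤ C * τ ^ (1 - b) := fun i =>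
    ae_abs_condExp_truncFun_le hb₁.le hτ (hint i) (hintb i) (hzero i) (hcond i)
  simpa only [Pi.sub_apply, sub_add_cancel] using integral_sq_average_add_le (M := M) hX hX₂ hX₀ hXv
    (fun i => integrable_condExp.aestronglyMeasurable) hMB hn

end Average

lemma sqrt_add_eq_mul_rpow {b c C n : ℝ} (hb : 0 < b) (hc : 0 < c) (hC : 0 ≤ C) (hn : 0 < n) :
    √(C * (c * n ^ (1 / b)) ^ (2 - b) / n) + C * (c * n ^ (1 / b)) ^ (1 - b)
      = (√C * c ^ ((2 - b) / 2) + C * c ^ (1 - b)) * n ^ ((1 - b) / b) := by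
  have hpow : ∀ e, (c * n ^ (1 / b)) ^ e = c ^ e * n ^ (e / b) := fun e => by
    rw [mul_rpow hc.le (rpow_nonneg hn.le _), ← rpow_mul hn.le, one_div_mul_eq_div]
  have hn₂ : n ^ ((2 - b) / b) / n = (n ^ ((1 - b) / b)) ^ 2 := by
    rw [← rpow_sub_one hn.ne', ← rpow_natCast, ← rpow_mul hn.le]
    congr 1
    field_simp
    ring
  have hc₂ : √(c ^ (2 - b)) = c ^ ((2 - b) / 2) := by
    rw [sqrt_eq_rpow, ← rpow_mul hc.le]
    ring_nf
  rw [hpow, hpow, ← mul_assoc, mul_div_assoc, hn₂, sqrt_mul (mul_nonneg hC (rpow_nonneg hc.le _)),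
    sqrt_mul hC, sqrt_sq (rpow_nonneg hn.le _), hc₂]
  ring

/-- `D i` is the paper's `D_{i+1}`: it is `ℱ (i + 1)`-measurable and its conditional moments are
taken given `ℱ i`. -/
theorem truncated_average_deviation_bound
    {Ω : Type*} {mΩ : MeasurableSpace Ω} (μ : Measure Ω) [IsProbabilityMeasure μ]
    (ℱ : Filtration ℕ mΩ)
    (b c C : ℝ) (hb : b ∈ Set.Ioc (1 : ℝ) 2) (hc : 0 < c) (hC : 0 ≤ C)
    (D : ℕ → Ω → ℝ)
    (hmeas : ∀ i, Measurable[ℱ (i + 1)] (D i))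
    (hint : ∀ i, Integrable (D i) μ)
    (hintb : ∀ i, Integrable (fun ω => |D i ω| ^ b) μ)
    (hzero : ∀ i, μ[D i | ℱ i] =ᵐ[μ] 0)
    (hcond : ∀ i, ∀ᵐ ω ∂μ, (μ[fun ω' => |D i ω'| ^ b | ℱ i]) ω ≤ C) :
    ∀ lam : ℝ, 0 < lam → ∀ n : ℕ, 1 ≤ n →
      (μ {ω | lam * (n : ℝ) ^ ((1 - b) / b)
          ≤ |(1 / (n : ℝ)) * ∑ i ∈ Finset.range n,
              truncFun (c * (n : ℝ) ^ (1 / b)) (D i ω)|}).toReal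
        ≤ (Real.sqrt C * c ^ ((2 - b) / 2) + C * c ^ (1 - b)) ^ 2 / lam ^ 2 := by
  intro lam hlam n hn
  have hn₀ : (0 : ℝ) < n := by exact_mod_cast hn
  set τ := c * (n : ℝ) ^ (1 / b)
  set K := √C * c ^ ((2 - b) / 2) + C * c ^ (1 - b)
  set r := (n : ℝ) ^ ((1 - b) / b)
  have hτ : 0 < τ := by positivity
  have hL2 : ∫ ω, ((1 / n) * ∑ i ∈ range n, truncFun τ (D i ω)) ^ 2 ∂μ ≤ (K * r) ^ 2 := by
    rw [← sqrt_add_eq_mul_rpow (by linarith [hb.1]) hc hC hn₀]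
    exact integral_sq_average_truncFun_le hb hτ hmeas hint hintb hzero hcond hn
  have hmem : MemLp (fun ω => (1 / n) * ∑ i ∈ range n, truncFun τ (D i ω)) 2 μ :=
    (memLp_finsetSum _ fun i _ => memLp_truncFun_comp hτ.le (hint i).1 2).const_mul _
  calc μ.real {ω | lam * r ≤ |(1 / n) * ∑ i ∈ range n, truncFun τ (D i ω)|}
      ≤ (∫ ω, ((1 / n) * ∑ i ∈ range n, truncFun τ (D i ω)) ^ 2 ∂μ) / (lam * r) ^ 2 :=
        measureReal_abs_ge_le_integral_sq_div hmem (by positivity)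
    _ ≤ (K * r) ^ 2 / (lam * r) ^ 2 := by gcongr
    _ = K ^ 2 / lam ^ 2 := by
        rw [mul_pow, mul_pow, mul_div_mul_right _ _ (by positivity)]
end

section
/- Let E be a finite-dimensional real inner product space, let L : E → ℝ be concave and twice continuously differentiable, let θ₀ ∈ E, ε > 0, κ > 0, and set r = 2ε/κ. Assume ‖∇L(θ₀)‖ ≤ ε, and that for every θ ∈ E with ‖θ − θ₀‖ ≤ r and every v ∈ E, the second derivative satisfies L″(θ)[v, v] ≤ −κ ‖v‖². Then every θ* ∈ E with L(θ*) ≥ L(θ₀) (in particular, every global maximizer of L) satisfies ‖θ* − θ₀‖ ≤ r = 2ε/κ. -/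
/-!
Restrict `L` to the ray from `θ₀` through a far point `θs`. On the first stretch of length
`r = 2ε/κ` the slope of the restriction starts at most `ε` and decreases at rate at least `κ`,
so the restriction gains at most `εr - κr²/2 = 0` there and leaves with slope at most `-ε`.
Concavity keeps the slope below `-ε` from then on, hence `L θs < L θ₀`.
-/

open Set

theorem image_le_of_hasDerivAt_le_deriv_boundary {f f' B B' : ℝ → ℝ} {a b : ℝ}
    (hf : ∀ x ∈ Icc a b, HasDerivAt f (f' x) x) (hB : ∀ x ∈ Icc a b, HasDerivAt B (B' x) x)
    (ha : f a ≤ B a) (bound : ∀ x ∈ Ico a b, f' x ≤ B' x) : ∀ x ∈ Icc a b, f x ≤ B x :=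
  image_le_of_deriv_right_le_deriv_boundary
    (fun x hx => (hf x hx).continuousAt.continuousWithinAt)
    (fun x hx => (hf x (Ico_subset_Icc_self hx)).hasDerivWithinAt) ha
    (fun x hx => (hB x hx).continuousAt.continuousWithinAt)
    (fun x hx => (hB x (Ico_subset_Icc_self hx)).hasDerivWithinAt) bound

section OneDimensional

variable {g g' g'' : ℝ → ℝ} {ε κ r : ℝ}

theorem deriv_le_of_secondDeriv_le (hg' : ∀ t ∈ Icc 0 r, HasDerivAt g' (g'' t) t)
    (hg'' : ∀ t ∈ Icc 0 r, g'' t ≤ -κ) (h0 : g' 0 ≤ ε) :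
    ∀ t ∈ Icc 0 r, g' t ≤ ε - κ * t :=
  image_le_of_hasDerivAt_le_deriv_boundary hg'
    (fun t _ => by simpa using ((hasDerivAt_id t).const_mul κ).const_sub ε)
    (by simpa using h0) (fun t ht => hg'' t (Ico_subset_Icc_self ht))

theorem apply_le_of_secondDeriv_le (hg : ∀ t ∈ Icc 0 r, HasDerivAt g (g' t) t)
    (hg' : ∀ t ∈ Icc 0 r, HasDerivAt g' (g'' t) t) (hg'' : ∀ t ∈ Icc 0 r, g'' t ≤ -κ)
    (h0 : g' 0 ≤ ε) : ∀ t ∈ Icc 0 r, g t ≤ g 0 + ε * t - κ * t ^ 2 / 2 := by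
  refine image_le_of_hasDerivAt_le_deriv_boundary hg
    (B := fun t => g 0 + ε * t - κ * t ^ 2 / 2) (B' := fun t => ε - κ * t) (fun t _ => ?_)
    (by simp) fun t ht => deriv_le_of_secondDeriv_le hg' hg'' h0 t (Ico_subset_Icc_self ht)
  exact ((((hasDerivAt_id t).const_mul ε).const_add (g 0)).sub
    (((hasDerivAt_pow 2 t).const_mul κ).div_const 2)).congr_deriv (by simp; ring)

theorem ConcaveOn.apply_lt_apply_zero_of_secondDeriv_le (hconc : ConcaveOn ℝ (Ici 0) g)
    (hε : 0 < ε) (hκ : 0 < κ) (hg : ∀ t, 0 ≤ t → HasDerivAt g (g' t) t)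
    (hg' : ∀ t ∈ Icc 0 (2 * ε / κ), HasDerivAt g' (g'' t) t)
    (hg'' : ∀ t ∈ Icc 0 (2 * ε / κ), g'' t ≤ -κ) (h0 : g' 0 ≤ ε) {T : ℝ}
    (hT : 2 * ε / κ < T) :
    g T < g 0 := by
  set r := 2 * ε / κ with hr
  have hr_mem : r ∈ Icc 0 r := right_mem_Icc.2 (by positivity)
  have hκr : κ * r = 2 * ε := by rw [hr]; field_simp
  have hgr : g r ≤ g 0 := by
    have := apply_le_of_secondDeriv_le (fun t ht => hg t ht.1) hg' hg'' h0 r hr_mem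
    nlinarith
  have hg'r : g' r ≤ -ε := by
    have := deriv_le_of_secondDeriv_le hg' hg'' h0 r hr_mem
    linarith
  have hslope : slope g r T ≤ g' r :=
    hconc.slope_le_of_hasDerivAt hr_mem.1 (hr_mem.1.trans hT.le) hT (hg r hr_mem.1)
  rw [slope_def_field, div_le_iff₀ (sub_pos.2 hT)] at hslope
  nlinarith [sub_pos.2 hT]

end OneDimensional

section Line

variable {E : Type*} [NormedAddCommGroup E] [NormedSpace ℝ E] {L : E → ℝ}

theorem ConcaveOn.comp_add_smul (hconc : ConcaveOn ℝ univ L) (x v : E) :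
    ConcaveOn ℝ univ fun t : ℝ => L (x + t • v) := by
  simpa [Function.comp_def, AffineMap.lineMap_apply_module', add_comm x]
    using hconc.comp_affineMap (AffineMap.lineMap x (v + x))

theorem hasDerivAt_add_smul (x v : E) (t : ℝ) : HasDerivAt (fun s : ℝ => x + s • v) v t :=
  (((hasDerivAt_id t).smul_const v).const_add x).congr_deriv (one_smul ℝ v)

theorem hasDerivAt_comp_add_smul {x v : E} {t : ℝ} (hL : DifferentiableAt ℝ L (x + t • v)) :
    HasDerivAt (fun s : ℝ => L (x + s • v)) (fderiv ℝ L (x + t • v) v) t :=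
  hL.hasFDerivAt.comp_hasDerivAt t (hasDerivAt_add_smul x v t)

theorem hasDerivAt_fderiv_comp_add_smul {x v : E} {t : ℝ} (hL : ContDiffAt ℝ 2 L (x + t • v)) :
    HasDerivAt (fun s : ℝ => fderiv ℝ L (x + s • v) v)
      (iteratedFDeriv ℝ 2 L (x + t • v) ![v, v]) t := by
  have hL' : HasFDerivAt (fderiv ℝ L) (fderiv ℝ (fderiv ℝ L) (x + t • v)) (x + t • v) :=
    (hL.fderiv_right_succ (n := 1)).differentiableAt_one.hasFDerivAt
  have hcomp := hL'.comp_hasDerivAt t (hasDerivAt_add_smul x v t)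
  rw [iteratedFDeriv_two_apply]
  simpa using hcomp.clm_apply (hasDerivAt_const t v)

end Line

theorem ConcaveOn.apply_add_smul_lt_of_iteratedFDeriv_le
    {E : Type*} [NormedAddCommGroup E] [InnerProductSpace ℝ E] [CompleteSpace E]
    {L : E → ℝ} {x u : E} {ε κ T : ℝ} (hε : 0 < ε) (hκ : 0 < κ)
    (hconc : ConcaveOn ℝ univ L) (hsmooth : ContDiff ℝ 2 L) (hgrad : ‖gradient L x‖ ≤ ε)
    (hcurv : ∀ θ : E, ‖θ - x‖ ≤ 2 * ε / κ →
      ∀ v : E, iteratedFDeriv ℝ 2 L θ ![v, v] ≤ -κ * ‖v‖ ^ 2)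
    (hu : ‖u‖ = 1) (hT : 2 * ε / κ < T) :
    L (x + T • u) < L x := by
  have h0 : fderiv ℝ L (x + (0 : ℝ) • u) u ≤ ε :=
    calc fderiv ℝ L (x + (0 : ℝ) • u) u = inner ℝ (gradient L x) u := by
          rw [zero_smul, add_zero, inner_gradient_left]
      _ ≤ ‖gradient L x‖ * ‖u‖ := real_inner_le_norm _ _
      _ ≤ ε := by rwa [hu, mul_one]
  have hcurv_ray : ∀ t ∈ Icc 0 (2 * ε / κ), iteratedFDeriv ℝ 2 L (x + t • u) ![u, u] ≤ -κ := by
    intro t ht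
    simpa [hu] using hcurv _ (by simpa [norm_smul, hu, abs_of_nonneg ht.1] using ht.2) u
  have hconc_ray : ConcaveOn ℝ (Ici 0) fun t : ℝ => L (x + t • u) :=
    (hconc.comp_add_smul x u).subset (subset_univ _) (convex_Ici 0)
  simpa using hconc_ray.apply_lt_apply_zero_of_secondDeriv_le hε hκ
    (fun t _ => hasDerivAt_comp_add_smul (hsmooth.differentiable (by norm_num) _))
    (fun t _ => hasDerivAt_fderiv_comp_add_smul hsmooth.contDiffAt) hcurv_ray h0 hT

/-- Deterministic localization lemma for concave maximization: a small gradient at `θ₀`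
together with uniformly negative curvature on the ball of radius `2ε/κ` forces any point
with criterion value at least `L θ₀` (in particular any maximizer) into that ball. -/
theorem concave_maximizer_localization
    {E : Type*} [NormedAddCommGroup E] [InnerProductSpace ℝ E] [FiniteDimensional ℝ E]
    (L : E → ℝ) (θ₀ : E) (ε κ : ℝ) (hε : 0 < ε) (hκ : 0 < κ)
    (hconc : ConcaveOn ℝ Set.univ L) (hsmooth : ContDiff ℝ 2 L)
    (hgrad : ‖gradient L θ₀‖ ≤ ε)
    (hcurv : ∀ θ : E, ‖θ - θ₀‖ ≤ 2 * ε / κ →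
      ∀ v : E, iteratedFDeriv ℝ 2 L θ ![v, v] ≤ -κ * ‖v‖ ^ 2) :
    ∀ θs : E, L θ₀ ≤ L θs → ‖θs - θ₀‖ ≤ 2 * ε / κ := by
  intro θs hLs
  by_contra! hfar
  have hT : ‖θs - θ₀‖ ≠ 0 := ((by positivity : 0 < 2 * ε / κ).trans hfar).ne'
  have hθs : θ₀ + ‖θs - θ₀‖ • ‖θs - θ₀‖⁻¹ • (θs - θ₀) = θs := by
    rw [smul_smul, mul_inv_cancel₀ hT, one_smul, add_sub_cancel]
  have hu : ‖‖θs - θ₀‖⁻¹ • (θs - θ₀)‖ = 1 := by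
    rw [norm_smul, norm_inv, norm_norm, inv_mul_cancel₀ hT]
  have hlt := hconc.apply_add_smul_lt_of_iteratedFDeriv_le hε hκ hsmooth hgrad hcurv hu hfar
  rw [hθs] at hlt
  exact hlt.not_ge hLs
end
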